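/- Let T₁, T₂ ∈ B_A(H) and set P = T₁^{#_A}T₁ + T₂T₂^{#_A}. Then w_A(T₁T₂) ≤ (1/4)·√( ‖P‖_A² + 4·w_A(T₂T₁)² + 2·w_A(T₂T₁ P + P T₂T₁) ). -/

import Mathlib

noncomputable section

open ContinuousLinearMap

/-- The semi-inner product induced by a positive operator `A`: `⟪x, y⟫_A = ⟪A x, y⟫`. -/
def sInnerA {E : Type*} [NormedAddCommGroup E] [InnerProductSpace ℂ E]
    (A : E →L[ℂ] E) (x y : E) : ℂ :=
  inner ℂ (A x) y

/-- The seminorm induced by `A`: `‖x‖_A = √(re ⟪A x, x⟫)`. -/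
def sNormA {E : Type*} [NormedAddCommGroup E] [InnerProductSpace ℂ E]
    (A : E →L[ℂ] E) (x : E) : ℝ :=
  Real.sqrt (sInnerA A x x).re

/-- The `A`-operator seminorm: `sup {‖T x‖_A : x ∈ closure (range A), ‖x‖_A = 1}`. -/
def opNormA {E : Type*} [NormedAddCommGroup E] [InnerProductSpace ℂ E]
    (A T : E →L[ℂ] E) : ℝ :=
  sSup {r | ∃ x ∈ closure (Set.range A), sNormA A x = 1 ∧ r = sNormA A (T x)}

/-- The `A`-numerical radius: `sup {|⟪T x, x⟫_A| : ‖x‖_A = 1}`. -/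
def wA {E : Type*} [NormedAddCommGroup E] [InnerProductSpace ℂ E]
    (A T : E →L[ℂ] E) : ℝ :=
  sSup {r | ∃ x, sNormA A x = 1 ∧ r = ‖sInnerA A (T x) x‖}

/-- The `A`-Crawford number: `inf {|⟪T x, x⟫_A| : ‖x‖_A = 1}`. -/
def cA {E : Type*} [NormedAddCommGroup E] [InnerProductSpace ℂ E]
    (A T : E →L[ℂ] E) : ℝ :=
  sInf {r | ∃ x, sNormA A x = 1 ∧ r = ‖sInnerA A (T x) x‖}

/-- `T ∈ B_A(H)`, i.e. the range of `T* A` is contained in the range of `A`. -/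
def memBA {E : Type*} [NormedAddCommGroup E] [InnerProductSpace ℂ E] [CompleteSpace E]
    (A T : E →L[ℂ] E) : Prop :=
  Set.range ((adjoint T) ∘L A) ⊆ Set.range A

/-- `S` is the distinguished `A`-adjoint `T^{#_A}` of `T`:
`A ∘ S = T* ∘ A` and `R(S) ⊆ closure (R(A))`. -/
def IsSharpA {E : Type*} [NormedAddCommGroup E] [InnerProductSpace ℂ E] [CompleteSpace E]
    (A T S : E →L[ℂ] E) : Prop :=
  A ∘L S = (adjoint T) ∘L A ∧ Set.range S ⊆ closure (Set.range A)

/-- The `2 × 2` operator matrix `[[X, Y], [Z, W]]` acting blockwise on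
the Hilbert space direct sum `H ⊕ H`. -/
def blk2 {H : Type*} [NormedAddCommGroup H] [InnerProductSpace ℂ H]
    (X Y Z W : H →L[ℂ] H) : WithLp 2 (H × H) →L[ℂ] WithLp 2 (H × H) :=
  ((WithLp.prodContinuousLinearEquiv 2 ℂ H H).symm : (H × H) →L[ℂ] WithLp 2 (H × H)) ∘L
    ((X ∘L ContinuousLinearMap.fst ℂ H H + Y ∘L ContinuousLinearMap.snd ℂ H H).prod
      (Z ∘L ContinuousLinearMap.fst ℂ H H + W ∘L ContinuousLinearMap.snd ℂ H H)) ∘L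
    ((WithLp.prodContinuousLinearEquiv 2 ℂ H H) : WithLp 2 (H × H) →L[ℂ] H × H)

/-!
Factor `A = R* R`; then `‖x‖_A = ‖R x‖`, so the seminorm obeys the Hilbert-space identities
(Cauchy–Schwarz, parallelogram law, polarization).

Fix `x` with `‖x‖_A = 1`, put `c = ⟪T₁ T₂ x, x⟫_A = ⟪T₂ x, T₁^# x⟫_A` and choose `|a| = 1` with
`a c = |c|`. The operator `E = T₂ + a T₁^#` has `A`-adjoint `F = T₂^# + ā T₁`, and
`4 |c| ≤ ‖E x‖_A² ≤ ‖E‖_A² ≤ ‖F‖_A² ≤ ‖E F‖_A`, where `E F = P + C` with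
`C = ā T₂T₁ + a (T₂T₁)^#`. Both `P` and `C` are `A`-selfadjoint, so
`‖P + C‖_A² ≤ ‖(P + C)²‖_A ≤ ‖P‖_A² + ‖P C + C P‖_A + ‖C‖_A²`, and for `A`-selfadjoint
operators `‖·‖_A ≤ w_A` by polarization; this bounds `‖C‖_A` by `2 w_A(T₂T₁)` and
`‖P C + C P‖_A` by `2 w_A(T₂T₁ P + P T₂T₁)`.

Every operator `T` with an `A`-adjoint is `A`-bounded: for the `A`-selfadjoint `G = T^# T` the
sequence `k ↦ ‖G^k x‖_A` is log-convex and grows at most like `‖G‖^k`, whence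
`‖G x‖_A ≤ ‖G‖ ‖x‖_A`.
-/

open scoped InnerProductSpace ComplexConjugate

theorem Complex.exists_norm_eq_one_mul_eq_norm (c : ℂ) : ∃ a : ℂ, ‖a‖ = 1 ∧ a * c = ‖c‖ := by
  refine ⟨exp (↑(-arg c) * I), norm_exp_ofReal_mul_I _, ?_⟩
  calc exp (↑(-arg c) * I) * c = exp (↑(-arg c) * I) * (‖c‖ * exp (arg c * I)) := by
        rw [norm_mul_exp_arg_mul_I]
    _ = ‖c‖ := by
        rw [mul_left_comm, ← exp_add, ofReal_neg, neg_mul, neg_add_cancel, exp_zero, mul_one]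

theorem le_mul_of_sq_le_mul_of_le_mul_pow {a : ℕ → ℝ} {C r : ℝ} (ha : ∀ k, 0 ≤ a k)
    (hr : 0 ≤ r) (hconv : ∀ k, a (k + 1) ^ 2 ≤ a k * a (k + 2))
    (hbound : ∀ k, a k ≤ C * r ^ k) : a 1 ≤ r * a 0 := by
  have hratio : ∀ n, a 1 * a n ≤ a 0 * a (n + 1) := by
    intro n
    induction n with
    | zero => exact (mul_comm _ _).le
    | succ n ih =>
      rcases (ha (n + 1)).eq_or_lt with h0 | hpos
      · rw [← h0, mul_zero]
        exact mul_nonneg (ha 0) (ha _)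
      · refine le_of_mul_le_mul_right ?_ hpos
        calc a 1 * a (n + 1) * a (n + 1) = a 1 * a (n + 1) ^ 2 := by ring
          _ ≤ a 1 * (a n * a (n + 2)) := mul_le_mul_of_nonneg_left (hconv n) (ha 1)
          _ = a 1 * a n * a (n + 2) := by ring
          _ ≤ a 0 * a (n + 1) * a (n + 2) := mul_le_mul_of_nonneg_right ih (ha _)
          _ = a 0 * a (n + 1 + 1) * a (n + 1) := by ring
  have hpow : ∀ n, a 1 ^ n * a 0 ≤ a 0 ^ n * a n := by
    intro n
    induction n with
    | zero => simp
    | succ n ih =>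
      calc a 1 ^ (n + 1) * a 0 = a 1 * (a 1 ^ n * a 0) := by ring
        _ ≤ a 1 * (a 0 ^ n * a n) := mul_le_mul_of_nonneg_left ih (ha 1)
        _ = a 0 ^ n * (a 1 * a n) := by ring
        _ ≤ a 0 ^ n * (a 0 * a (n + 1)) :=
          mul_le_mul_of_nonneg_left (hratio n) (pow_nonneg (ha 0) n)
        _ = a 0 ^ (n + 1) * a (n + 1) := by ring
  rcases (ha 0).eq_or_lt with h0 | h0
  · have h1 := hconv 0
    rw [← h0, zero_mul] at h1
    rw [← h0, mul_zero]
    nlinarith [ha 1]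
  rcases hr.eq_or_lt with hr0 | hr0
  · simpa [← hr0] using hbound 1
  by_contra! hlt
  have hq : 1 < a 1 / (r * a 0) := (one_lt_div (by positivity)).mpr hlt
  obtain ⟨n, hn⟩ := pow_unbounded_of_one_lt (C / a 0) hq
  have : (a 1 / (r * a 0)) ^ n ≤ C / a 0 := by
    rw [div_pow, div_le_div_iff₀ (by positivity) h0]
    calc a 1 ^ n * a 0 ≤ a 0 ^ n * a n := hpow n
      _ ≤ a 0 ^ n * (C * r ^ n) := mul_le_mul_of_nonneg_left (hbound n) (by positivity)
      _ = C * (r * a 0) ^ n := by ring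
  linarith

section SemiInnerProduct

variable {H : Type*} [NormedAddCommGroup H] [InnerProductSpace ℂ H] {A : H →L[ℂ] H}

theorem sNormA_nonneg (A : H →L[ℂ] H) (x : H) : 0 ≤ sNormA A x := Real.sqrt_nonneg _

theorem closure_range_eq_topologicalClosure (A : H →L[ℂ] H) :
    closure (Set.range A) = (A.range.topologicalClosure : Set H) := by
  rw [Submodule.topologicalClosure_coe, LinearMap.coe_range]
  rfl

theorem opNormA_nonneg (A T : H →L[ℂ] H) : 0 ≤ opNormA A T :=
  Real.sSup_nonneg fun _ ⟨_, _, _, hr⟩ => hr ▸ sNormA_nonneg A _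

theorem opNormA_le_of_forall {T : H →L[ℂ] H} {c : ℝ} (hc : 0 ≤ c)
    (h : ∀ x ∈ closure (Set.range A), sNormA A x = 1 → sNormA A (T x) ≤ c) :
    opNormA A T ≤ c :=
  Real.sSup_le (fun _ ⟨x, hx, h1, hr⟩ => hr ▸ h x hx h1) hc

theorem wA_nonneg (A T : H →L[ℂ] H) : 0 ≤ wA A T :=
  Real.sSup_nonneg fun _ ⟨_, _, hr⟩ => hr ▸ norm_nonneg _

theorem wA_le_of_forall {T : H →L[ℂ] H} {c : ℝ} (hc : 0 ≤ c)
    (h : ∀ x, sNormA A x = 1 → ‖sInnerA A (T x) x‖ ≤ c) : wA A T ≤ c :=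
  Real.sSup_le (fun _ ⟨x, h1, hr⟩ => hr ▸ h x h1) hc

def IsABounded (A T : H →L[ℂ] H) : Prop := ∃ c : ℝ, ∀ x, sNormA A (T x) ≤ c * sNormA A x

namespace IsABounded

variable {T V : H →L[ℂ] H}

theorem sNormA_apply_eq_zero (hT : IsABounded A T) {x : H} (hx : sNormA A x = 0) :
    sNormA A (T x) = 0 := by
  obtain ⟨c, hc⟩ := hT
  exact le_antisymm (by simpa [hx] using hc x) (sNormA_nonneg A _)

theorem sNormA_apply_le_opNormA (hT : IsABounded A T) {x : H}
    (hx : x ∈ closure (Set.range A)) (h1 : sNormA A x = 1) : sNormA A (T x) ≤ opNormA A T := by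
  obtain ⟨c, hc⟩ := hT
  refine le_csSup ⟨c, ?_⟩ ⟨x, hx, h1, rfl⟩
  rintro _ ⟨y, -, hy, rfl⟩
  simpa [hy] using hc y

end IsABounded

variable [CompleteSpace H]

theorem ContinuousLinearMap.IsPositive.exists_eq_adjoint_comp_self (hA : A.IsPositive) :
    ∃ R : H →L[ℂ] H, A = adjoint R ∘L R :=
  CStarAlgebra.nonneg_iff_eq_star_mul_self.mp ((nonneg_iff_isPositive A).mpr hA)

theorem sInnerA_adjoint_comp_self (R : H →L[ℂ] H) (x y : H) :
    sInnerA (adjoint R ∘L R) x y = ⟪R x, R y⟫_ℂ :=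
  adjoint_inner_left R y (R x)

theorem sNormA_adjoint_comp_self (R : H →L[ℂ] H) (x : H) :
    sNormA (adjoint R ∘L R) x = ‖R x‖ := by
  rw [sNormA, sInnerA_adjoint_comp_self, ← RCLike.re_to_complex, inner_self_eq_norm_sq,
    Real.sqrt_sq (norm_nonneg _)]

theorem sq_sNormA (hA : A.IsPositive) (x : H) : sNormA A x ^ 2 = (sInnerA A x x).re := by
  obtain ⟨R, rfl⟩ := hA.exists_eq_adjoint_comp_self
  rw [sNormA_adjoint_comp_self, sInnerA_adjoint_comp_self, ← RCLike.re_to_complex,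
    inner_self_eq_norm_sq]

theorem norm_sInnerA_le (hA : A.IsPositive) (x y : H) :
    ‖sInnerA A x y‖ ≤ sNormA A x * sNormA A y := by
  obtain ⟨R, rfl⟩ := hA.exists_eq_adjoint_comp_self
  simpa only [sInnerA_adjoint_comp_self, sNormA_adjoint_comp_self] using
    norm_inner_le_norm (R x) (R y)

theorem re_sInnerA_le (hA : A.IsPositive) (x y : H) :
    (sInnerA A x y).re ≤ sNormA A x * sNormA A y :=
  (Complex.re_le_norm _).trans (norm_sInnerA_le hA x y)

theorem sNormA_add_le (hA : A.IsPositive) (x y : H) :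
    sNormA A (x + y) ≤ sNormA A x + sNormA A y := by
  obtain ⟨R, rfl⟩ := hA.exists_eq_adjoint_comp_self
  simpa only [sNormA_adjoint_comp_self, map_add] using norm_add_le (R x) (R y)

theorem sNormA_sub_le (hA : A.IsPositive) (x y : H) :
    sNormA A (x - y) ≤ sNormA A x + sNormA A y := by
  obtain ⟨R, rfl⟩ := hA.exists_eq_adjoint_comp_self
  simpa only [sNormA_adjoint_comp_self, map_sub] using norm_sub_le (R x) (R y)

theorem sNormA_smul (hA : A.IsPositive) (b : ℂ) (x : H) :
    sNormA A (b • x) = ‖b‖ * sNormA A x := by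
  obtain ⟨R, rfl⟩ := hA.exists_eq_adjoint_comp_self
  simp only [sNormA_adjoint_comp_self, map_smul, norm_smul]

theorem sNormA_inv_smul_self (hA : A.IsPositive) {x : H} (hx : sNormA A x ≠ 0) :
    sNormA A (((sNormA A x)⁻¹ : ℝ) • x) = 1 := by
  rw [← Complex.coe_smul, sNormA_smul hA, Complex.norm_real, Real.norm_eq_abs,
    abs_of_nonneg (inv_nonneg.mpr (sNormA_nonneg A x)), inv_mul_cancel₀ hx]

theorem four_mul_re_sInnerA_le (hA : A.IsPositive) (x y : H) :
    4 * (sInnerA A x y).re ≤ sNormA A (x + y) ^ 2 := by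
  obtain ⟨R, rfl⟩ := hA.exists_eq_adjoint_comp_self
  rw [sInnerA_adjoint_comp_self, sNormA_adjoint_comp_self, ← RCLike.re_to_complex,
    re_inner_eq_norm_add_mul_self_sub_norm_sub_mul_self_div_four, map_add]
  nlinarith [mul_self_nonneg ‖R x - R y‖]

theorem sNormA_add_sq_add_sNormA_sub_sq (hA : A.IsPositive) (x y : H) :
    sNormA A (x + y) ^ 2 + sNormA A (x - y) ^ 2 = 2 * (sNormA A x ^ 2 + sNormA A y ^ 2) := by
  obtain ⟨R, rfl⟩ := hA.exists_eq_adjoint_comp_self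
  simpa only [sNormA_adjoint_comp_self, map_add, map_sub] using
    parallelogram_law_with_norm ℂ (R x) (R y)

theorem exists_mem_closure_range_sNormA_sub_eq_zero (A : H →L[ℂ] H) (x : H) :
    ∃ p ∈ closure (Set.range A), sNormA A (x - p) = 0 := by
  set K := A.range.topologicalClosure
  refine ⟨K.starProjection x, ?_, ?_⟩
  · rw [closure_range_eq_topologicalClosure]
    exact K.starProjection_apply_mem x
  · have hAK : A (x - K.starProjection x) ∈ K :=
      Submodule.le_topologicalClosure _ (LinearMap.mem_range_self (A : H →ₗ[ℂ] H) _)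
    rw [sNormA, sInnerA,
      Submodule.inner_right_of_mem_orthogonal hAK (K.sub_starProjection_mem_orthogonal x)]
    simp

theorem sInnerA_eq_inner_apply_right (hA : IsSelfAdjoint A) (x y : H) :
    sInnerA A x y = ⟪x, A y⟫_ℂ := by
  rw [sInnerA, ← adjoint_inner_right, hA.adjoint_eq]

namespace IsABounded

variable {T V : H →L[ℂ] H}

theorem le_opNormA_of_mem (hA : A.IsPositive) (hT : IsABounded A T) {x : H}
    (hx : x ∈ closure (Set.range A)) : sNormA A (T x) ≤ opNormA A T * sNormA A x := by
  rcases (sNormA_nonneg A x).eq_or_lt with h0 | h0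
  · rw [hT.sNormA_apply_eq_zero h0.symm, ← h0, mul_zero]
  have hmem : ((sNormA A x)⁻¹ : ℝ) • x ∈ closure (Set.range A) := by
    rw [closure_range_eq_topologicalClosure] at hx ⊢
    exact Submodule.smul_of_tower_mem _ _ hx
  have h := hT.sNormA_apply_le_opNormA hmem (sNormA_inv_smul_self hA h0.ne')
  rwa [← Complex.coe_smul, map_smul, sNormA_smul hA, Complex.norm_real, Real.norm_eq_abs,
    abs_of_pos (inv_pos.mpr h0), inv_mul_le_iff₀ h0, mul_comm] at h

theorem le_opNormA (hA : A.IsPositive) (hT : IsABounded A T) (x : H) :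
    sNormA A (T x) ≤ opNormA A T * sNormA A x := by
  obtain ⟨p, hp, hxp⟩ := exists_mem_closure_range_sNormA_sub_eq_zero A x
  calc sNormA A (T x) = sNormA A (T p + T (x - p)) := by rw [← map_add, add_sub_cancel]
    _ ≤ sNormA A (T p) + sNormA A (T (x - p)) := sNormA_add_le hA _ _
    _ = sNormA A (T p) := by rw [hT.sNormA_apply_eq_zero hxp, add_zero]
    _ ≤ opNormA A T * sNormA A p := hT.le_opNormA_of_mem hA hp
    _ ≤ opNormA A T * sNormA A x := by
      refine mul_le_mul_of_nonneg_left ?_ (opNormA_nonneg A T)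
      simpa [hxp] using sNormA_sub_le hA x (x - p)

theorem opNormA_add_le (hA : A.IsPositive) (hT : IsABounded A T) (hV : IsABounded A V) :
    opNormA A (T + V) ≤ opNormA A T + opNormA A V :=
  opNormA_le_of_forall (add_nonneg (opNormA_nonneg A T) (opNormA_nonneg A V)) fun x hx h1 =>
    (sNormA_add_le hA (T x) (V x)).trans
      (add_le_add (hT.sNormA_apply_le_opNormA hx h1) (hV.sNormA_apply_le_opNormA hx h1))

theorem opNormA_comp_le (hA : A.IsPositive) (hT : IsABounded A T) (hV : IsABounded A V) :
    opNormA A (T ∘L V) ≤ opNormA A T * opNormA A V :=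
  opNormA_le_of_forall (mul_nonneg (opNormA_nonneg A T) (opNormA_nonneg A V)) fun x hx h1 =>
    (hT.le_opNormA hA (V x)).trans
      (mul_le_mul_of_nonneg_left (hV.sNormA_apply_le_opNormA hx h1) (opNormA_nonneg A T))

theorem norm_sInnerA_le_wA (hA : A.IsPositive) (hT : IsABounded A T) {x : H}
    (h1 : sNormA A x = 1) : ‖sInnerA A (T x) x‖ ≤ wA A T := by
  obtain ⟨c, hc⟩ := hT
  refine le_csSup ⟨c, ?_⟩ ⟨x, h1, rfl⟩
  rintro _ ⟨y, hy, rfl⟩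
  simpa [hy] using
    (norm_sInnerA_le hA (T y) y).trans (mul_le_mul_of_nonneg_right (hc y) (sNormA_nonneg A y))

theorem norm_sInnerA_le_wA_mul (hA : A.IsPositive) (hT : IsABounded A T) (x : H) :
    ‖sInnerA A (T x) x‖ ≤ wA A T * sNormA A x ^ 2 := by
  rcases (sNormA_nonneg A x).eq_or_lt with h0 | h0
  · have h := norm_sInnerA_le hA (T x) x
    rw [← h0, mul_zero] at h
    rw [← h0]
    simpa using h
  have h := hT.norm_sInnerA_le_wA hA (sNormA_inv_smul_self hA h0.ne')
  rw [← Complex.coe_smul, map_smul, sInnerA, map_smul, inner_smul_left, inner_smul_right,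
    ← sInnerA, norm_mul, norm_mul, Complex.norm_conj, Complex.norm_real, Real.norm_eq_abs,
    abs_of_pos (inv_pos.mpr h0), ← mul_assoc, ← sq, inv_pow, inv_mul_le_iff₀ (by positivity)] at h
  linarith

end IsABounded

def IsAAdjoint (A T S : H →L[ℂ] H) : Prop := A ∘L S = adjoint T ∘L A

namespace IsAAdjoint

variable {T S T' S' : H →L[ℂ] H}

theorem symm (hA : IsSelfAdjoint A) (h : IsAAdjoint A T S) : IsAAdjoint A S T := by
  have h' := congrArg adjoint h
  rwa [adjoint_comp, adjoint_comp, adjoint_adjoint, ← star_eq_adjoint A, hA.star_eq,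
    eq_comm] at h'

theorem comp (h : IsAAdjoint A T S) (h' : IsAAdjoint A T' S') :
    IsAAdjoint A (T ∘L T') (S' ∘L S) := by
  rw [IsAAdjoint, adjoint_comp, ← comp_assoc, h', comp_assoc, h, comp_assoc]

theorem add (h : IsAAdjoint A T S) (h' : IsAAdjoint A T' S') :
    IsAAdjoint A (T + T') (S + S') := by
  rw [IsAAdjoint, ← star_eq_adjoint, star_add, star_eq_adjoint, star_eq_adjoint, comp_add,
    add_comp, h, h']

theorem smul (h : IsAAdjoint A T S) (b : ℂ) : IsAAdjoint A (b • T) (conj b • S) := by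
  rw [IsAAdjoint, ← star_eq_adjoint, star_smul, star_eq_adjoint, comp_smul, smul_comp, h]
  rfl

theorem sInnerA_apply_left (hA : IsSelfAdjoint A) (h : IsAAdjoint A T S) (x y : H) :
    sInnerA A (T x) y = sInnerA A x (S y) := by
  rw [sInnerA_eq_inner_apply_right hA, sInnerA_eq_inner_apply_right hA, ← comp_apply A S, h,
    comp_apply, adjoint_inner_right]

theorem norm_sInnerA_apply_self (hA : IsSelfAdjoint A) (h : IsAAdjoint A T S) (x : H) :
    ‖sInnerA A (S x) x‖ = ‖sInnerA A (T x) x‖ := by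
  rw [(h.symm hA).sInnerA_apply_left hA, sInnerA_eq_inner_apply_right hA, sInnerA,
    ← inner_conj_symm, Complex.norm_conj]

theorem sNormA_apply_sq_le (hA : A.IsPositive) (h : IsAAdjoint A T S) (x : H) :
    sNormA A (T x) ^ 2 ≤ sNormA A x * sNormA A (S (T x)) := by
  rw [sq_sNormA hA, h.sInnerA_apply_left hA.isSelfAdjoint]
  exact re_sInnerA_le hA _ _

theorem sNormA_apply_le_of_self (hA : A.IsPositive) {G : H →L[ℂ] H} (hG : IsAAdjoint A G G)
    (x : H) : sNormA A (G x) ≤ ‖G‖ * sNormA A x := by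
  have hconv : ∀ k, sNormA A (G^[k + 1] x) ^ 2 ≤ sNormA A (G^[k] x) * sNormA A (G^[k + 2] x) := by
    intro k
    simp only [Function.iterate_succ_apply']
    exact hG.sNormA_apply_sq_le hA _
  obtain ⟨R, rfl⟩ := hA.exists_eq_adjoint_comp_self
  have hiter : ∀ k, ‖G^[k] x‖ ≤ ‖G‖ ^ k * ‖x‖ := by
    intro k
    induction k with
    | zero => simp
    | succ k ih =>
      rw [Function.iterate_succ_apply', pow_succ', mul_assoc]
      exact (G.le_opNorm _).trans (mul_le_mul_of_nonneg_left ih (norm_nonneg G))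
  refine le_mul_of_sq_le_mul_of_le_mul_pow (a := fun k => sNormA _ (G^[k] x)) (C := ‖R‖ * ‖x‖)
    (fun _ => sNormA_nonneg _ _) (norm_nonneg G) hconv fun k => ?_
  calc sNormA _ (G^[k] x) = ‖R (G^[k] x)‖ := sNormA_adjoint_comp_self R _
    _ ≤ ‖R‖ * (‖G‖ ^ k * ‖x‖) :=
      (R.le_opNorm _).trans (mul_le_mul_of_nonneg_left (hiter k) (norm_nonneg R))
    _ = ‖R‖ * ‖x‖ * ‖G‖ ^ k := by ring

theorem isABounded (hA : A.IsPositive) (h : IsAAdjoint A T S) : IsABounded A T := by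
  have hST : IsAAdjoint A (S ∘L T) (S ∘L T) := (h.symm hA.isSelfAdjoint).comp h
  refine ⟨√‖S ∘L T‖, fun x => ?_⟩
  have h1 := h.sNormA_apply_sq_le hA x
  have h2 := hST.sNormA_apply_le_of_self hA x
  have hx := sNormA_nonneg A x
  refine le_of_pow_le_pow_left₀ two_ne_zero (by positivity) ?_
  rw [mul_pow, Real.sq_sqrt (norm_nonneg _)]
  calc sNormA A (T x) ^ 2 ≤ sNormA A x * sNormA A (S (T x)) := h1
    _ ≤ sNormA A x * (‖S ∘L T‖ * sNormA A x) := mul_le_mul_of_nonneg_left h2 hx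
    _ = ‖S ∘L T‖ * sNormA A x ^ 2 := by ring

theorem wA_smul_add_smul_le (hA : A.IsPositive) (h : IsAAdjoint A T S) (b c : ℂ) :
    wA A (b • T + c • S) ≤ (‖b‖ + ‖c‖) * wA A T := by
  refine wA_le_of_forall (by positivity [wA_nonneg A T]) fun x hx => ?_
  have hTx := (h.isABounded hA).norm_sInnerA_le_wA hA hx
  have hlin : sInnerA A ((b • T + c • S) x) x
      = conj b * sInnerA A (T x) x + conj c * sInnerA A (S x) x := by
    simp only [sInnerA, add_apply, smul_apply, map_add, map_smul, inner_add_left,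
      inner_smul_left]
  rw [hlin]
  calc ‖conj b * sInnerA A (T x) x + conj c * sInnerA A (S x) x‖
      ≤ ‖b‖ * ‖sInnerA A (T x) x‖ + ‖c‖ * ‖sInnerA A (S x) x‖ := by
        simpa only [norm_mul, Complex.norm_conj] using
          norm_add_le (conj b * sInnerA A (T x) x) (conj c * sInnerA A (S x) x)
    _ = (‖b‖ + ‖c‖) * ‖sInnerA A (T x) x‖ := by
      rw [h.norm_sInnerA_apply_self hA.isSelfAdjoint]
      ring
    _ ≤ (‖b‖ + ‖c‖) * wA A T := by gcongr

theorem four_mul_re_sInnerA_eq (hA : IsSelfAdjoint A) {C : H →L[ℂ] H} (hC : IsAAdjoint A C C)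
    (x y : H) :
    4 * (sInnerA A (C x) y).re
      = (sInnerA A (C (x + y)) (x + y)).re - (sInnerA A (C (x - y)) (x - y)).re := by
  have hyx : (sInnerA A (C y) x).re = (sInnerA A (C x) y).re := by
    rw [hC.sInnerA_apply_left hA, sInnerA_eq_inner_apply_right hA, sInnerA, ← inner_conj_symm,
      Complex.conj_re]
  simp only [sInnerA, map_add, map_sub, inner_add_left, inner_add_right, inner_sub_left,
    inner_sub_right, Complex.add_re, Complex.sub_re] at hyx ⊢
  linarith

theorem opNormA_le_wA (hA : A.IsPositive) {C : H →L[ℂ] H} (hC : IsAAdjoint A C C) :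
    opNormA A C ≤ wA A C := by
  have hb := hC.isABounded hA
  refine opNormA_le_of_forall (wA_nonneg A C) fun x _ hx => ?_
  rcases (sNormA_nonneg A (C x)).eq_or_lt with h0 | h0
  · exact h0 ▸ wA_nonneg A C
  set y := ((sNormA A (C x))⁻¹ : ℝ) • C x with hy_def
  have hy : sNormA A y = 1 := sNormA_inv_smul_self hA h0.ne'
  have hre : (sInnerA A (C x) y).re = sNormA A (C x) := by
    rw [hy_def, ← Complex.coe_smul, sInnerA, inner_smul_right, ← sInnerA, Complex.re_ofReal_mul,
      ← sq_sNormA hA]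
    field_simp
  have hplus := (Complex.re_le_norm _).trans (hb.norm_sInnerA_le_wA_mul hA (x + y))
  have hminus := ((neg_le_abs _).trans (Complex.abs_re_le_norm _)).trans
    (hb.norm_sInnerA_le_wA_mul hA (x - y))
  have hpar : wA A C * sNormA A (x + y) ^ 2 + wA A C * sNormA A (x - y) ^ 2 = 4 * wA A C := by
    rw [← mul_add, sNormA_add_sq_add_sNormA_sub_sq hA, hx, hy]
    ring
  linarith [hC.four_mul_re_sInnerA_eq hA.isSelfAdjoint x y]

theorem opNormA_le (hA : A.IsPositive) (h : IsAAdjoint A T S) : opNormA A T ≤ opNormA A S := by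
  refine opNormA_le_of_forall (opNormA_nonneg A S) fun x _ hx => ?_
  have h1 := h.sNormA_apply_sq_le hA x
  have h2 := ((h.symm hA.isSelfAdjoint).isABounded hA).le_opNormA hA (T x)
  rw [hx, one_mul] at h1
  nlinarith [sNormA_nonneg A (T x), opNormA_nonneg A S]

theorem opNormA_sq_le (hA : A.IsPositive) (h : IsAAdjoint A T S) :
    opNormA A T ^ 2 ≤ opNormA A (S ∘L T) := by
  have hST : IsABounded A (S ∘L T) := ((h.symm hA.isSelfAdjoint).comp h).isABounded hA
  refine (Real.le_sqrt (opNormA_nonneg A T) (opNormA_nonneg A _)).mp ?_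
  refine opNormA_le_of_forall (Real.sqrt_nonneg _) fun x hxA hx => ?_
  refine Real.le_sqrt_of_sq_le ?_
  have h1 := h.sNormA_apply_sq_le hA x
  rw [hx, one_mul] at h1
  exact h1.trans (hST.sNormA_apply_le_opNormA hxA hx)

theorem comp_add_comp_self {N C : H →L[ℂ] H} (hN : IsAAdjoint A N N) (hC : IsAAdjoint A C C) :
    IsAAdjoint A (N ∘L C + C ∘L N) (N ∘L C + C ∘L N) := by
  have h := (hN.comp hC).add (hC.comp hN)
  rwa [add_comm (C ∘L N)] at h

theorem opNormA_add_sq_le (hA : A.IsPositive) {N C : H →L[ℂ] H} (hN : IsAAdjoint A N N)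
    (hC : IsAAdjoint A C C) :
    opNormA A (N + C) ^ 2 ≤ opNormA A N ^ 2 + opNormA A (N ∘L C + C ∘L N) + opNormA A C ^ 2 := by
  have hNC := hN.comp_add_comp_self hC
  have hsq : (N + C) ∘L (N + C) = N ∘L N + (N ∘L C + C ∘L N) + C ∘L C := by
    simp only [comp_add, add_comp]
    abel
  have bN := hN.isABounded hA
  have bC := hC.isABounded hA
  calc opNormA A (N + C) ^ 2 ≤ opNormA A ((N + C) ∘L (N + C)) := (hN.add hC).opNormA_sq_le hA
    _ ≤ opNormA A (N ∘L N) + opNormA A (N ∘L C + C ∘L N) + opNormA A (C ∘L C) := by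
      rw [hsq]
      refine ((((hN.comp hN).add hNC).isABounded hA).opNormA_add_le hA
        ((hC.comp hC).isABounded hA)).trans ?_
      gcongr
      exact ((hN.comp hN).isABounded hA).opNormA_add_le hA (hNC.isABounded hA)
    _ ≤ opNormA A N ^ 2 + opNormA A (N ∘L C + C ∘L N) + opNormA A C ^ 2 := by
      rw [sq, sq]
      gcongr
      · exact bN.opNormA_comp_le hA bN
      · exact bC.opNormA_comp_le hA bC

theorem opNormA_add_smul_add_smul_sq_le (hA : A.IsPositive) {N X Y : H →L[ℂ] H}
    (hN : IsAAdjoint A N N) (hX : IsAAdjoint A X Y) {a : ℂ} (ha : ‖a‖ = 1) :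
    opNormA A (N + (conj a • X + a • Y)) ^ 2
      ≤ opNormA A N ^ 2 + 4 * wA A X ^ 2 + 2 * wA A (X ∘L N + N ∘L X) := by
  set C := conj a • X + a • Y with hC_def
  have hC : IsAAdjoint A C C := by
    have h := (hX.smul (conj a)).add ((hX.symm hA.isSelfAdjoint).smul a)
    rwa [Complex.conj_conj, add_comm (a • Y)] at h
  have hNC := hN.comp_add_comp_self hC
  have hK : IsAAdjoint A (X ∘L N + N ∘L X) (N ∘L Y + Y ∘L N) := (hX.comp hN).add (hN.comp hX)
  have hNC_eq : N ∘L C + C ∘L N = conj a • (X ∘L N + N ∘L X) + a • (N ∘L Y + Y ∘L N) := by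
    simp only [hC_def, comp_add, add_comp, comp_smul, smul_comp, smul_add]
    abel
  have hnorm : ‖conj a‖ + ‖a‖ = 2 := by rw [Complex.norm_conj, ha]; norm_num
  have hCw : opNormA A C ≤ 2 * wA A X :=
    (hC.opNormA_le_wA hA).trans (hnorm ▸ hX.wA_smul_add_smul_le hA (conj a) a)
  have hNCw : opNormA A (N ∘L C + C ∘L N) ≤ 2 * wA A (X ∘L N + N ∘L X) :=
    (hNC.opNormA_le_wA hA).trans (hNC_eq ▸ hnorm ▸ hK.wA_smul_add_smul_le hA (conj a) a)
  have hCsq := pow_le_pow_left₀ (opNormA_nonneg A C) hCw 2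
  linarith [hN.opNormA_add_sq_le hA hC]

theorem exists_four_mul_norm_sInnerA_comp_le (hA : A.IsPositive) {T₁ S₁ T₂ S₂ : H →L[ℂ] H}
    (h₁ : IsAAdjoint A T₁ S₁) (h₂ : IsAAdjoint A T₂ S₂) {x : H} (hx : sNormA A x = 1) :
    ∃ a : ℂ, ‖a‖ = 1 ∧ 4 * ‖sInnerA A ((T₁ ∘L T₂) x) x‖
      ≤ opNormA A (S₁ ∘L T₁ + T₂ ∘L S₂ + (conj a • (T₂ ∘L T₁) + a • (S₁ ∘L S₂))) := by
  set c := sInnerA A ((T₁ ∘L T₂) x) x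
  obtain ⟨a, ha, hac⟩ := Complex.exists_norm_eq_one_mul_eq_norm c
  refine ⟨a, ha, ?_⟩
  have hsa := hA.isSelfAdjoint
  set E := T₂ + a • S₁
  set F := S₂ + conj a • T₁
  have hEF : IsAAdjoint A E F := h₂.add ((h₁.symm hsa).smul a)
  have hprod : E ∘L F = S₁ ∘L T₁ + T₂ ∘L S₂ + (conj a • (T₂ ∘L T₁) + a • (S₁ ∘L S₂)) := by
    have haa : conj a * a = 1 := by rw [RCLike.conj_mul, ha]; norm_num
    simp only [E, F, comp_add, add_comp, comp_smul, smul_comp, smul_add, smul_smul, haa,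
      one_smul]
    abel
  have hcross : (sInnerA A (T₂ x) (a • S₁ x)).re = ‖c‖ := by
    rw [sInnerA, inner_smul_right, ← sInnerA, ← h₁.sInnerA_apply_left hsa, ← comp_apply, hac,
      Complex.ofReal_re]
  rw [← hprod]
  calc 4 * ‖c‖ = 4 * (sInnerA A (T₂ x) (a • S₁ x)).re := by rw [hcross]
    _ ≤ sNormA A (E x) ^ 2 := four_mul_re_sInnerA_le hA _ _
    _ ≤ opNormA A E ^ 2 := by
      refine pow_le_pow_left₀ (sNormA_nonneg A _) ?_ 2
      simpa [hx] using (hEF.isABounded hA).le_opNormA hA x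
    _ ≤ opNormA A F ^ 2 := pow_le_pow_left₀ (opNormA_nonneg A E) (hEF.opNormA_le hA) 2
    _ ≤ opNormA A (E ∘L F) := (hEF.symm hsa).opNormA_sq_le hA

end IsAAdjoint

end SemiInnerProduct

theorem stmt13_general {H : Type*} [NormedAddCommGroup H] [InnerProductSpace ℂ H] [CompleteSpace H]
    (A : H →L[ℂ] H) (hA : A.IsPositive)
    (T₁ T₂ T₁s T₂s : H →L[ℂ] H)
    (hT₁s : IsSharpA A T₁ T₁s) (hT₂s : IsSharpA A T₂ T₂s) :
    wA A (T₁ ∘L T₂) ≤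
      (1 / 4) * Real.sqrt (opNormA A (T₁s ∘L T₁ + T₂ ∘L T₂s) ^ 2 +
        4 * wA A (T₂ ∘L T₁) ^ 2 +
        2 * wA A ((T₂ ∘L T₁) ∘L (T₁s ∘L T₁ + T₂ ∘L T₂s) +
          (T₁s ∘L T₁ + T₂ ∘L T₂s) ∘L (T₂ ∘L T₁))) := by
  have h₁ : IsAAdjoint A T₁ T₁s := hT₁s.1
  have h₂ : IsAAdjoint A T₂ T₂s := hT₂s.1
  have hP : IsAAdjoint A (T₁s ∘L T₁ + T₂ ∘L T₂s) (T₁s ∘L T₁ + T₂ ∘L T₂s) :=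
    ((h₁.symm hA.isSelfAdjoint).comp h₁).add (h₂.comp (h₂.symm hA.isSelfAdjoint))
  refine wA_le_of_forall (by positivity) fun x hx => ?_
  obtain ⟨a, ha, hle⟩ := h₁.exists_four_mul_norm_sInnerA_comp_le hA h₂ hx
  have hsq := hP.opNormA_add_smul_add_smul_sq_le hA (h₂.comp h₁) ha
  have hroot := (le_abs_self _).trans (Real.abs_le_sqrt hsq)
  linarith

theorem stmt13 {H : Type*} [NormedAddCommGroup H] [InnerProductSpace ℂ H] [CompleteSpace H]
    (A : H →L[ℂ] H) (hA : A.IsPositive)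
    (T₁ T₂ T₁s T₂s : H →L[ℂ] H) (hT₁ : memBA A T₁) (hT₂ : memBA A T₂)
    (hT₁s : IsSharpA A T₁ T₁s) (hT₂s : IsSharpA A T₂ T₂s) :
    wA A (T₁ ∘L T₂) ≤
      (1 / 4) * Real.sqrt (opNormA A (T₁s ∘L T₁ + T₂ ∘L T₂s) ^ 2 +
        4 * wA A (T₂ ∘L T₁) ^ 2 +
        2 * wA A ((T₂ ∘L T₁) ∘L (T₁s ∘L T₁ + T₂ ∘L T₂s) +
          (T₁s ∘L T₁ + T₂ ∘L T₂s) ∘L (T₂ ∘L T₁))) :=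
  stmt13_general A hA T₁ T₂ T₁s T₂s hT₁s hT₂s
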